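/- arXiv:1401.2588 — 8 statements merged into one kernel-verified Lean document; each statement's English description precedes it below -/
import Mathlib

section
/- Let A, B be finite sets of integers such that there do not exist a₁ < a₂ < a₃ in A and b₁ < b₂ < b₃ in B with a₁+b₃ = a₂+b₂ = a₃+b₁. Then |A+B| ≤ |(A−B) ∪ (B−A)|; i.e., (A,B) is not a sum-dominant (MSTD) pair. -/
open Pointwise

/-!
Count `A × B` twice. Along the fibres of `(a, b) ↦ a + b` it has at least `|A + B| + |S|` elements,
where `S` is the set of sums with two or more representations. Along the fibres of
`(a, b) ↦ a - b` it has at most `|A - B| + |D|` elements, where `D` is the set of pairs that are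
not the one with largest `a` on their diagonal. A pair `(a, b) ∈ D`, below `(a', b')` on its
diagonal, gives the sum `a + b' = a' + b ∈ S`; the hypothesis says that every sum has at most two
representations, so this sum determines `(a, b)` (its representation with the smaller `a`, paired
with the `b` of the other one), whence `|D| ≤ |S|`.
-/

open Finset

section Fibers

variable {ι κ : Type*} [DecidableEq κ]

theorem card_image_add_card_filter_one_lt_card_fiber_le (f : ι → κ) (s : Finset ι) :
    #(s.image f) + #{b ∈ s.image f | 1 < #{a ∈ s | f a = b}} ≤ #s := by
  rw [card_eq_sum_card_image f s, card_eq_sum_ones, card_filter, ← sum_add_distrib]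
  refine sum_le_sum fun b hb => ?_
  have : 0 < #{a ∈ s | f a = b} := by
    obtain ⟨a, ha, rfl⟩ := mem_image.mp hb
    exact card_pos.mpr ⟨a, mem_filter.mpr ⟨ha, rfl⟩⟩
  split_ifs <;> omega

theorem card_le_card_image_add_card_filter_exists_lt {α : Type*} [LinearOrder α]
    (f : ι → κ) (g : ι → α) (s : Finset ι) (hfg : Set.InjOn (fun a => (f a, g a)) s) :
    #s ≤ #(s.image f) + #{a ∈ s | ∃ b ∈ s, f b = f a ∧ g a < g b} := by
  classical
  set U := {a ∈ s | ∃ b ∈ s, f b = f a ∧ g a < g b}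
  have hinj : Set.InjOn f ↑(s \ U) := by
    intro a ha b hb hab
    simp only [coe_sdiff, Set.mem_sdiff, mem_coe, U, mem_filter, not_and, not_exists] at ha hb
    have hg : g a = g b := le_antisymm (not_lt.mp fun h => hb.2 hb.1 a ha.1 hab h)
      (not_lt.mp fun h => ha.2 ha.1 b hb.1 hab.symm h)
    exact hfg ha.1 hb.1 (Prod.ext hab hg)
  calc #s = #(s \ U) + #U := (card_sdiff_add_card_eq_card (filter_subset _ s)).symm
    _ = #((s \ U).image f) + #U := by rw [card_image_of_injOn hinj]
    _ ≤ #(s.image f) + #U := by gcongr; exact sdiff_subset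

end Fibers

theorem eq_and_eq_of_forall_not_lt_lt {α : Type*} [LinearOrder α] {P : α → Prop}
    (hP : ∀ a b c, P a → P b → P c → a < b → b < c → False) {x y x' y' : α}
    (hx : P x) (hy : P y) (hx' : P x') (hy' : P y') (hxy : x < y) (hxy' : x' < y') :
    x = x' ∧ y = y' := by
  constructor
  · rcases lt_trichotomy x x' with h | h | h
    exacts [(hP x x' y' hx hx' hy' h hxy').elim, h, (hP x' x y hx' hx hy h hxy).elim]
  · rcases lt_trichotomy y y' with h | h | h
    exacts [(hP x y y' hx hy hy' hxy h).elim, h, (hP x' y' y hx' hy' hy hxy' h).elim]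

section Sumset

variable {α : Type*} (A B : Finset α)

theorem card_add_add_card_filter_one_lt_le [Add α] [DecidableEq α] :
    #(A + B) + #{s ∈ A + B | 1 < #{p ∈ A ×ˢ B | p.1 + p.2 = s}} ≤ #A * #B := by
  rw [← card_product, ← image_add_product]
  exact card_image_add_card_filter_one_lt_card_fiber_le _ _

theorem card_mul_le_card_sub_add_card_filter [AddGroup α] [LinearOrder α] :
    #A * #B ≤ #(A - B) + #{p ∈ A ×ˢ B | ∃ q ∈ A ×ˢ B, q.1 - q.2 = p.1 - p.2 ∧ p.1 < q.1} := by
  rw [← card_product, ← image_sub_product]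
  refine card_le_card_image_add_card_filter_exists_lt _ Prod.fst _ fun p _ q _ hpq => ?_
  simp only [Prod.mk.injEq] at hpq
  obtain ⟨hsub, hfst⟩ := hpq
  rw [hfst, sub_right_inj] at hsub
  exact Prod.ext hfst hsub

variable {A B} [AddCommGroup α] [LinearOrder α] [IsOrderedAddMonoid α]

theorem forall_not_lt_lt_of_not_exists
    (h : ¬ ∃ a₁ a₂ a₃ b₁ b₂ b₃ : α, a₁ ∈ A ∧ a₂ ∈ A ∧ a₃ ∈ A ∧
      b₁ ∈ B ∧ b₂ ∈ B ∧ b₃ ∈ B ∧ a₁ < a₂ ∧ a₂ < a₃ ∧ b₁ < b₂ ∧ b₂ < b₃ ∧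
      a₁ + b₃ = a₂ + b₂ ∧ a₂ + b₂ = a₃ + b₁) (s : α) :
    ∀ a₁ a₂ a₃, (a₁ ∈ A ∧ s - a₁ ∈ B) → (a₂ ∈ A ∧ s - a₂ ∈ B) → (a₃ ∈ A ∧ s - a₃ ∈ B) →
      a₁ < a₂ → a₂ < a₃ → False :=
  fun a₁ a₂ a₃ h₁ h₂ h₃ h₁₂ h₂₃ => h ⟨a₁, a₂, a₃, s - a₃, s - a₂, s - a₁, h₁.1, h₂.1, h₃.1,
    h₃.2, h₂.2, h₁.2, h₁₂, h₂₃, sub_lt_sub_left h₂₃ s, sub_lt_sub_left h₁₂ s,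
    by abel, by abel⟩

theorem card_filter_exists_lt_le_card_filter_one_lt
    (hP : ∀ s a₁ a₂ a₃, (a₁ ∈ A ∧ s - a₁ ∈ B) → (a₂ ∈ A ∧ s - a₂ ∈ B) →
      (a₃ ∈ A ∧ s - a₃ ∈ B) → a₁ < a₂ → a₂ < a₃ → False) :
    #{p ∈ A ×ˢ B | ∃ q ∈ A ×ˢ B, q.1 - q.2 = p.1 - p.2 ∧ p.1 < q.1} ≤
      #{s ∈ A + B | 1 < #{p ∈ A ×ˢ B | p.1 + p.2 = s}} := by
  refine card_le_card_of_forall_subsingleton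
    (fun p s => ∃ q ∈ A ×ˢ B, p.1 < q.1 ∧ p.1 + q.2 = s ∧ q.1 + p.2 = s) ?_ ?_
  · simp only [mem_filter, mem_product]
    rintro p ⟨⟨hpA, hpB⟩, q, ⟨hqA, hqB⟩, hpq, hlt⟩
    have hsum : q.1 + p.2 = p.1 + q.2 := sub_eq_sub_iff_add_eq_add.mp hpq
    refine ⟨p.1 + q.2, ⟨add_mem_add hpA hqB, one_lt_card.mpr ?_⟩, q, ⟨hqA, hqB⟩, hlt, rfl, hsum⟩
    exact ⟨(p.1, q.2), by simp [hpA, hqB], (q.1, p.2), by simp [hqA, hpB, hsum],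
      fun h => hlt.ne (Prod.ext_iff.mp h).1⟩
  · rintro s - p ⟨hp, q, hq, hlt, hps, hqs⟩ p' ⟨hp', q', hq', hlt', hps', hqs'⟩
    simp only [mem_filter, mem_product] at hp hq hp' hq'
    have rep {a b : α} (ha : a ∈ A) (hb : b ∈ B) (hab : a + b = s) : a ∈ A ∧ s - a ∈ B :=
      ⟨ha, by rwa [← hab, add_sub_cancel_left]⟩
    obtain ⟨h₁, h₂⟩ := eq_and_eq_of_forall_not_lt_lt (hP s) (rep hp.1.1 hq.2 hps)
      (rep hq.1 hp.1.2 hqs) (rep hp'.1.1 hq'.2 hps') (rep hq'.1 hp'.1.2 hqs') hlt hlt'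
    refine Prod.ext h₁ ?_
    rw [← hqs', ← h₂] at hqs
    exact add_left_cancel hqs

theorem card_add_le_card_sub
    (h : ¬ ∃ a₁ a₂ a₃ b₁ b₂ b₃ : α, a₁ ∈ A ∧ a₂ ∈ A ∧ a₃ ∈ A ∧
      b₁ ∈ B ∧ b₂ ∈ B ∧ b₃ ∈ B ∧ a₁ < a₂ ∧ a₂ < a₃ ∧ b₁ < b₂ ∧ b₂ < b₃ ∧
      a₁ + b₃ = a₂ + b₂ ∧ a₂ + b₂ = a₃ + b₁) :
    #(A + B) ≤ #(A - B) := by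
  have hsums := card_add_add_card_filter_one_lt_le A B
  have hdiffs := card_mul_le_card_sub_add_card_filter A B
  have hdominated := card_filter_exists_lt_le_card_filter_one_lt (forall_not_lt_lt_of_not_exists h)
  omega

end Sumset

theorem stmt2 (A B : Finset ℤ)
    (h : ¬ ∃ a₁ a₂ a₃ b₁ b₂ b₃ : ℤ, a₁ ∈ A ∧ a₂ ∈ A ∧ a₃ ∈ A ∧
      b₁ ∈ B ∧ b₂ ∈ B ∧ b₃ ∈ B ∧ a₁ < a₂ ∧ a₂ < a₃ ∧ b₁ < b₂ ∧ b₂ < b₃ ∧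
      a₁ + b₃ = a₂ + b₂ ∧ a₂ + b₂ = a₃ + b₁) :
    (A + B).card ≤ ((A - B) ∪ (B - A)).card :=
  (card_add_le_card_sub h).trans (card_le_card subset_union_left)
end

section
/- There is no MSTD pair (A,B) of finite sets of integers with |A| = 2: for any finite sets A, B ⊂ ℤ with |A| = 2, we have |A+B| ≤ |(A−B) ∪ (B−A)|. -/
/-!
A two-element set `{x, y}` is symmetric about its midpoint: `-{x, y} = -(x + y) +ᵥ {x, y}`.
For such a set `A`, the difference set `B - A = B + (-A)` is a translate of `A + B`, so
`|A + B| = |B - A| ≤ |±(A - B)|`.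
-/

open Pointwise Finset

theorem Finset.card_add_eq_card_sub_of_neg_eq_vadd {G : Type*} [AddCommGroup G] [DecidableEq G]
    {A : Finset G} {c : G} (hA : -A = c +ᵥ A) (B : Finset G) : #(A + B) = #(B - A) := by
  rw [sub_eq_add_neg, hA, ← singleton_add, add_left_comm, singleton_add, card_vadd_finset,
    add_comm A]

theorem Finset.neg_pair {G : Type*} [AddCommGroup G] [DecidableEq G] (x y : G) :
    -({x, y} : Finset G) = -(x + y) +ᵥ {x, y} := by
  rw [neg_insert, neg_singleton, vadd_finset_insert, vadd_finset_singleton, vadd_eq_add,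
    vadd_eq_add, pair_comm]
  congr 2 <;> abel

theorem stmt3 (A B : Finset ℤ) (hA : A.card = 2) :
    (A + B).card ≤ ((A - B) ∪ (B - A)).card := by
  obtain ⟨x, y, -, rfl⟩ := card_eq_two.mp hA
  calc #({x, y} + B) = #(B - {x, y}) := card_add_eq_card_sub_of_neg_eq_vadd (neg_pair x y) B
    _ ≤ _ := card_le_card subset_union_right
end

section
/- For any n ≥ 0 and any nonempty B ⊆ {0,1,...,n}, the pair (A,B) with A = {0,1,...,n} is not MSTD: |A+B| ≤ |(A−B) ∪ (B−A)|. Specifically, if s and l are the smallest and largest elements of B and d = max{n−s, l}, then A+B = [s, n+l] has n+l−s+1 elements while ±(A−B) = [−d, d] has 2d+1 elements, and n+l−s+1 ≤ 2d+1. -/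
/-!
Adding an integer interval `[a, b]` to `B`, or subtracting it from `B` on either side, fills every
gap of `B` as soon as `l - s ≤ b - a + 1`, which holds for `[0, n]` because `B ⊆ [0, n]`. Hence
`A + B = [s, n + l]`, while `A - B = [-l, n - s]` and `B - A = [s - n, l]` overlap and together
form `[-d, d]`. Finally `n + l - s ≤ 2 d` because `n - s ≤ d` and `l ≤ d`.
-/

open Pointwise

namespace Finset

variable {a b : ℤ} {B : Finset ℤ}

theorem Icc_add_eq_Icc (hB : B.Nonempty) (h : B.max' hB - B.min' hB ≤ b - a + 1) :
    Icc a b + B = Icc (a + B.min' hB) (b + B.max' hB) := by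
  have hs := B.min'_mem hB
  have hl := B.max'_mem hB
  ext x
  simp only [mem_add, mem_Icc]
  constructor
  · rintro ⟨y, hy, c, hc, rfl⟩
    have := B.min'_le c hc
    have := B.le_max' c hc
    omega
  · intro hx
    by_cases hxs : x - B.min' hB ≤ b
    · exact ⟨x - B.min' hB, by omega, _, hs, by ring⟩
    · exact ⟨x - B.max' hB, by omega, _, hl, by ring⟩

theorem Icc_sub_eq_Icc (hB : B.Nonempty) (h : B.max' hB - B.min' hB ≤ b - a + 1) :
    Icc a b - B = Icc (a - B.max' hB) (b - B.min' hB) := by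
  have hs := B.min'_mem hB
  have hl := B.max'_mem hB
  ext x
  simp only [mem_sub, mem_Icc]
  constructor
  · rintro ⟨y, hy, c, hc, rfl⟩
    have := B.min'_le c hc
    have := B.le_max' c hc
    omega
  · intro hx
    by_cases hxs : a ≤ x + B.min' hB
    · exact ⟨x + B.min' hB, by omega, _, hs, by ring⟩
    · exact ⟨x + B.max' hB, by omega, _, hl, by ring⟩

theorem sub_Icc_eq_Icc (hB : B.Nonempty) (h : B.max' hB - B.min' hB ≤ b - a + 1) :
    B - Icc a b = Icc (B.min' hB - b) (B.max' hB - a) := by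
  have hs := B.min'_mem hB
  have hl := B.max'_mem hB
  ext x
  simp only [mem_sub, mem_Icc]
  constructor
  · rintro ⟨c, hc, y, hy, rfl⟩
    have := B.min'_le c hc
    have := B.le_max' c hc
    omega
  · intro hx
    by_cases hxl : B.max' hB - x ≤ b
    · exact ⟨_, hl, B.max' hB - x, by omega, by ring⟩
    · exact ⟨_, hs, B.min' hB - x, by omega, by ring⟩

theorem Icc_neg_union_Icc_neg {x y : ℤ} (hx : 0 ≤ x) (hy : 0 ≤ y) :
    Icc (-x) y ∪ Icc (-y) x = Icc (-max x y) (max x y) := by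
  ext z
  simp only [mem_union, mem_Icc]
  omega

end Finset

open Finset in
theorem stmt8 (n : ℕ) (B : Finset ℤ) (hB : B.Nonempty)
    (hBsub : B ⊆ Finset.Icc (0 : ℤ) n) :
    let A : Finset ℤ := Finset.Icc (0 : ℤ) n
    let s : ℤ := B.min' hB
    let l : ℤ := B.max' hB
    let d : ℤ := max ((n : ℤ) - s) l
    A + B = Finset.Icc s ((n : ℤ) + l) ∧
      (A - B) ∪ (B - A) = Finset.Icc (-d) d ∧
      (n : ℤ) + l - s + 1 ≤ 2 * d + 1 ∧
      (A + B).card ≤ ((A - B) ∪ (B - A)).card := by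
  intro A s l d
  have hs : 0 ≤ s ∧ s ≤ n := mem_Icc.mp (hBsub (B.min'_mem hB))
  have hl : 0 ≤ l ∧ l ≤ n := mem_Icc.mp (hBsub (B.max'_mem hB))
  have hdiam : l - s ≤ n - 0 + 1 := by omega
  have hsum : A + B = Icc s (n + l) := by
    rw [Icc_add_eq_Icc hB hdiam, zero_add]
  have hdiff : (A - B) ∪ (B - A) = Icc (-d) d := by
    rw [Icc_sub_eq_Icc hB hdiam, sub_Icc_eq_Icc hB hdiam, zero_sub, sub_zero, ← neg_sub (n : ℤ) s,
      Icc_neg_union_Icc_neg hl.1 (by omega), max_comm]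
  have hlen : (n : ℤ) + l - s + 1 ≤ 2 * d + 1 := by
    have := le_max_left ((n : ℤ) - s) l
    have := le_max_right ((n : ℤ) - s) l
    omega
  refine ⟨hsum, hdiff, hlen, ?_⟩
  rw [hsum, hdiff, Int.card_Icc, Int.card_Icc]
  omega
end

section
/- Let a₁ ≥ 0 and d > 0 be integers, A = {a₁, a₁+d, a₁+2d} and B = {0, 2a₁, 2a₁+d, 2a₁+2d}. Then (A,B) is not an MSTD pair: |A+B| ≤ |(A−B) ∪ (B−A)|. -/
/-!
The set `A = {a₁, a₁ + d, a₁ + 2d}` is symmetric about its midpoint: `a ↦ s - a` with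
`s = 2a₁ + 2d` permutes it. For such an `A` every sum `a + b` equals `s + (b - (s - a))`, so the
translate `A + B - s` already lies inside `B - A`.
-/

open Pointwise

namespace Finset

variable {G : Type*} [AddCommGroup G] [DecidableEq G]

theorem card_add_le_card_sub_of_forall_sub_mem {A B : Finset G} {s : G}
    (hA : ∀ a ∈ A, s - a ∈ A) : (A + B).card ≤ (B - A).card := by
  refine card_le_card_of_injOn (· - s) ?_ sub_left_injective.injOn
  intro x hx
  obtain ⟨a, ha, b, hb, rfl⟩ := mem_add.1 hx
  exact mem_sub.2 ⟨b, hb, s - a, hA a ha, by rw [sub_sub_eq_add_sub, add_comm]⟩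

end Finset

theorem stmt10_general (a₁ d : ℤ) :
    (({a₁, a₁ + d, a₁ + 2 * d} : Finset ℤ) +
        ({0, 2 * a₁, 2 * a₁ + d, 2 * a₁ + 2 * d} : Finset ℤ)).card ≤
      ((({a₁, a₁ + d, a₁ + 2 * d} : Finset ℤ) -
          ({0, 2 * a₁, 2 * a₁ + d, 2 * a₁ + 2 * d} : Finset ℤ)) ∪
        (({0, 2 * a₁, 2 * a₁ + d, 2 * a₁ + 2 * d} : Finset ℤ) -
          ({a₁, a₁ + d, a₁ + 2 * d} : Finset ℤ))).card := by
  refine (Finset.card_add_le_card_sub_of_forall_sub_mem (s := 2 * a₁ + 2 * d) ?_).trans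
    (Finset.card_le_card Finset.subset_union_right)
  intro a ha
  simp only [Finset.mem_insert, Finset.mem_singleton] at ha ⊢
  omega

theorem stmt10 (a₁ d : ℤ) (ha : 0 ≤ a₁) (hd : 0 < d) :
    (({a₁, a₁ + d, a₁ + 2 * d} : Finset ℤ) +
        ({0, 2 * a₁, 2 * a₁ + d, 2 * a₁ + 2 * d} : Finset ℤ)).card ≤
      ((({a₁, a₁ + d, a₁ + 2 * d} : Finset ℤ) -
          ({0, 2 * a₁, 2 * a₁ + d, 2 * a₁ + 2 * d} : Finset ℤ)) ∪
        (({0, 2 * a₁, 2 * a₁ + d, 2 * a₁ + 2 * d} : Finset ℤ) -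
          ({a₁, a₁ + d, a₁ + 2 * d} : Finset ℤ))).card :=
  stmt10_general a₁ d
end

section
/- Let A and B be finite sets of integers with |A| = 3, |B| = 4, and suppose (A,B) is MSTD, i.e., |A+B| > |(A−B) ∪ (B−A)|. Then there exists exactly one integer s such that |{(a,b) ∈ A×B : a+b = s}| = 3, and moreover for every d ∈ A−B we have −d ∈ A−B. -/
/-!
Write `r(s) = #{(a, b) ∈ A × B | a + b = s}`, and `r⁻(t)` for the analogous count of
`a - b = t`, which is the representation function of the pair `(A, -B)`. Both take values in
`{1, 2, 3}` on their supports, sum to `|A||B| = 12`, and have the same sum of squares, the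
additive energy `E(A, B) = E(A, -B)`. Since `n² + 2 = 3n + 2·[n = 3]` for `n ∈ {1, 2, 3}`,
`|A + B| - |A - B| = #{s | r(s) = 3} - #{t | r⁻(t) = 3}`.

If two sums `s ≠ s'` are full, `r(s) = r(s') = 3`, then `s - A` and `s' - A` both lie in `B`,
which forces `A` to be a 3-term and `B` a 4-term arithmetic progression with a common
difference. Then `B = c - B`, so `A + B = (A - B) + c` is no larger than `A - B` and the pair is
not MSTD. Hence an MSTD pair has exactly one full sum, and `|±(A - B)| = |A - B|`, i.e. `A - B`
is symmetric.
-/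

open Pointwise Finset
open scoped Combinatorics.Additive

lemma sum_sq_add_two_mul_card {ι : Type*} (S : Finset ι) (f : ι → ℕ)
    (hf : ∀ i ∈ S, 1 ≤ f i ∧ f i ≤ 3) :
    ∑ i ∈ S, f i ^ 2 + 2 * #S = 3 * ∑ i ∈ S, f i + 2 * #{i ∈ S | f i = 3} := by
  rw [card_filter, card_eq_sum_ones, mul_sum, mul_sum, mul_sum, ← sum_add_distrib,
    ← sum_add_distrib]
  refine sum_congr rfl fun i hi => ?_
  obtain ⟨h1, h3⟩ := hf i hi
  interval_cases f i <;> rfl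

section AddCommGroup

variable {G : Type*} [AddCommGroup G] [DecidableEq G] (A B : Finset G)

lemma injOn_fst_filter_add_eq (s : G) :
    Set.InjOn Prod.fst (↑{p ∈ A ×ˢ B | p.1 + p.2 = s} : Set (G × G)) := by
  intro p hp q hq h
  simp only [coe_filter, Set.mem_ofPred_eq] at hp hq
  exact Prod.ext h (add_left_cancel (h ▸ hp.2.trans hq.2.symm))

lemma card_filter_add_eq_le_card_left (s : G) : #{p ∈ A ×ˢ B | p.1 + p.2 = s} ≤ #A :=
  card_le_card_of_injOn Prod.fst (fun _ hp => (mem_product.1 (mem_filter.1 hp).1).1)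
    (injOn_fst_filter_add_eq A B s)

lemma card_filter_add_eq_pos_iff {s : G} :
    0 < #{p ∈ A ×ˢ B | p.1 + p.2 = s} ↔ s ∈ A + B := by
  simp [card_pos, Finset.Nonempty, mem_add, and_assoc]

lemma sum_card_filter_add_eq : ∑ s ∈ A + B, #{p ∈ A ×ˢ B | p.1 + p.2 = s} = #A * #B := by
  rw [← card_product]
  exact (card_eq_sum_card_fiberwise fun p hp =>
    add_mem_add (mem_product.1 hp).1 (mem_product.1 hp).2).symm

lemma addEnergy_neg_right : E[A, -B] = E[A, B] := by
  refine card_nbij' (fun x => (x.1, -x.2.2, -x.2.1)) (fun x => (x.1, -x.2.2, -x.2.1))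
    ?_ ?_ (fun _ _ => by simp) (fun _ _ => by simp) <;>
  · rintro ⟨⟨a₁, a₂⟩, b₁, b₂⟩ h
    simp only [coe_filter, mem_product, mem_neg', Set.mem_ofPred_eq, neg_neg] at h ⊢
    refine ⟨⟨h.1.1, h.1.2.2, h.1.2.1⟩, ?_⟩
    rw [← sub_eq_add_neg, ← sub_eq_add_neg]
    exact sub_eq_sub_iff_add_eq_add.2 h.2

lemma sub_mem_of_card_filter_add_eq_card {s : G}
    (h : #{p ∈ A ×ˢ B | p.1 + p.2 = s} = #A) : ∀ a ∈ A, s - a ∈ B := by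
  have himage : image Prod.fst {p ∈ A ×ˢ B | p.1 + p.2 = s} = A := by
    refine eq_of_subset_of_card_le (fun a ha => ?_) ?_
    · obtain ⟨p, hp, rfl⟩ := mem_image.1 ha
      exact (mem_product.1 (mem_filter.1 hp).1).1
    · rw [card_image_of_injOn (injOn_fst_filter_add_eq A B s), h]
  intro a ha
  obtain ⟨p, hp, rfl⟩ := mem_image.1 (himage.symm ▸ ha)
  rw [mem_filter, mem_product] at hp
  rw [← hp.2, add_sub_cancel_left]
  exact hp.1.2

lemma two_mul_card_le_card_add_card_inter {s δ : G} (hs : ∀ a ∈ A, s - a ∈ B)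
    (hs' : ∀ a ∈ A, s + δ - a ∈ B) : 2 * #A ≤ #B + #(A ∩ A.image (· + δ)) := by
  have hsub : (A ∪ A.image (· + δ)).image (s + δ - ·) ⊆ B := by
    simp only [image_subset_iff, mem_union, mem_image]
    rintro x (hx | ⟨a, ha, rfl⟩)
    · exact hs' x hx
    · simpa using hs a ha
  have hunion := card_le_card hsub
  rw [card_image_of_injective _ sub_right_injective] at hunion
  have hinter := card_union_add_card_inter A (A.image (· + δ))
  rw [card_image_of_injective _ (add_left_injective δ)] at hinter
  omega

lemma card_add_eq_card_sub_of_sub_mem {c : G} (hB : ∀ b ∈ B, c - b ∈ B) :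
    #(A + B) = #(A - B) := by
  have : A + B = (A - B).image (· + c) := by
    ext x
    simp only [mem_add, mem_sub, mem_image]
    constructor
    · rintro ⟨a, ha, b, hb, rfl⟩
      exact ⟨a - (c - b), ⟨a, ha, c - b, hB b hb, rfl⟩, by abel⟩
    · rintro ⟨_, ⟨a, ha, b, hb, rfl⟩, rfl⟩
      exact ⟨a, ha, c - b, hB b hb, by abel⟩
  rw [this, card_image_of_injective _ (add_left_injective c)]

lemma addEnergy_add_two_mul_card_add (hA : #A = 3) :
    E[A, B] + 2 * #(A + B) =
      3 * (#A * #B) + 2 * #{s ∈ A + B | #{p ∈ A ×ˢ B | p.1 + p.2 = s} = 3} := by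
  rw [addEnergy_eq_sum_sq', ← sum_card_filter_add_eq]
  exact sum_sq_add_two_mul_card _ _ fun s hs =>
    ⟨(card_filter_add_eq_pos_iff A B).2 hs, hA ▸ card_filter_add_eq_le_card_left A B s⟩

end AddCommGroup

lemma exists_ap_of_two_le_card_inter {A : Finset ℤ} (hA : #A = 3) {δ : ℤ} (hδ : δ ≠ 0)
    (h : 2 ≤ #(A ∩ A.image (· + δ))) : ∃ c, c ∈ A ∧ c + δ ∈ A ∧ c + 2 * δ ∈ A := by
  obtain ⟨_, hu, _, hv, huv⟩ := one_lt_card.1 h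
  simp only [mem_inter, mem_image] at hu hv
  obtain ⟨hu, a, ha, rfl⟩ := hu
  obtain ⟨hv, b, hb, rfl⟩ := hv
  have hab : b = a + δ ∨ a = b + δ := by
    by_contra! hne
    have := three_lt_card.2 ⟨a, ha, b, hb, a + δ, hu, b + δ, hv,
      by omega, by omega, by omega, by omega, by omega, huv⟩
    omega
  rcases hab with rfl | rfl
  · exact ⟨a, ha, hu, by rwa [two_mul, ← add_assoc]⟩
  · exact ⟨b, hb, ha, by rwa [two_mul, ← add_assoc]⟩

lemma sub_mem_of_ap_subset {B : Finset ℤ} (hB : #B = 4) {x δ : ℤ} (hδ : δ ≠ 0)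
    (h₀ : x ∈ B) (h₁ : x + δ ∈ B) (h₂ : x + 2 * δ ∈ B) (h₃ : x + 3 * δ ∈ B) :
    ∀ b ∈ B, 2 * x + 3 * δ - b ∈ B := by
  have hB' : {x, x + δ, x + 2 * δ, x + 3 * δ} = B := by
    refine eq_of_subset_of_card_le (by simp [insert_subset_iff, *]) ?_
    rw [hB, card_eq_four.2
      ⟨_, _, _, _, by omega, by omega, by omega, by omega, by omega, by omega, rfl⟩]
  simp only [← hB', mem_insert, mem_singleton]
  omega

lemma card_add_eq_card_sub_of_two_full_sums {A B : Finset ℤ} (hA : #A = 3) (hB : #B = 4)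
    {s s' : ℤ} (hs : #{p ∈ A ×ˢ B | p.1 + p.2 = s} = 3)
    (hs' : #{p ∈ A ×ˢ B | p.1 + p.2 = s'} = 3) (hne : s ≠ s') : #(A + B) = #(A - B) := by
  have H := sub_mem_of_card_filter_add_eq_card A B (hs.trans hA.symm)
  have H' := sub_mem_of_card_filter_add_eq_card A B (hs'.trans hA.symm)
  have hδ : s' - s ≠ 0 := sub_ne_zero.2 hne.symm
  obtain ⟨c, hc₀, hc₁, hc₂⟩ := exists_ap_of_two_le_card_inter hA hδ <| by
    have := two_mul_card_le_card_add_card_inter A B (δ := s' - s) H (by simpa using H')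
    omega
  -- With `δ = s' - s`, `B` contains `s - c - 2δ, s - c - δ, s - c` and `s' - c = s - c + δ`.
  refine card_add_eq_card_sub_of_sub_mem A B
    (sub_mem_of_ap_subset hB (x := s - c - 2 * (s' - s)) hδ ?_ ?_ ?_ ?_)
  · convert H _ hc₂ using 1; ring
  · convert H _ hc₁ using 1; ring
  · convert H _ hc₀ using 1; ring
  · convert H' _ hc₀ using 1; ring

theorem stmt12 (A B : Finset ℤ) (hA : A.card = 3) (hB : B.card = 4)
    (hMSTD : (A + B).card > ((A - B) ∪ (B - A)).card) :
    (∃! s : ℤ, ((A ×ˢ B).filter (fun p => p.1 + p.2 = s)).card = 3) ∧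
      ∀ d ∈ A - B, -d ∈ A - B := by
  have hsum := addEnergy_add_two_mul_card_add A B hA
  have hdiff := addEnergy_add_two_mul_card_add A (-B) hA
  rw [addEnergy_neg_right, card_neg, ← sub_eq_add_neg] at hdiff
  have hsub_le_union : #(A - B) ≤ #(A - B ∪ (B - A)) := card_le_card subset_union_left
  have hfull_le : #{s ∈ A + B | #{p ∈ A ×ˢ B | p.1 + p.2 = s} = 3} ≤ 1 :=
    card_le_one.2 fun s hs s' hs' => by_contra fun hne => by
      have := card_add_eq_card_sub_of_two_full_sums hA hB (mem_filter.1 hs).2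
        (mem_filter.1 hs').2 hne
      omega
  have hfull : #{s ∈ A + B | #{p ∈ A ×ˢ B | p.1 + p.2 = s} = 3} = 1 := by omega
  obtain ⟨s, hs⟩ := card_eq_one.1 hfull
  obtain ⟨hs_mem, hs_unique⟩ := eq_singleton_iff_unique_mem.1 hs
  have hsymm : B - A ⊆ A - B :=
    union_eq_left.1 (eq_of_subset_of_card_le subset_union_left (by omega)).symm
  refine ⟨⟨s, (mem_filter.1 hs_mem).2, fun t ht => ?_⟩, fun d hd => ?_⟩
  · exact hs_unique t (mem_filter.2 ⟨(card_filter_add_eq_pos_iff A B).1 (by omega), ht⟩)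
  · exact hsymm (neg_sub A B ▸ neg_mem_neg hd)
end

section
/- Let A, B be finite sets of integers. Then |A+A| − |A−A| = Σ_s (|X_s|−1)(|X_s|−2)/2 − Σ_d (|Y_d|−1)(|Y_d|−2)/2, where X_s = {(a,b) ∈ A×A : a+b = s} and Y_d = {(a,b) ∈ A×A : a−b = d}, and the sums are over s ∈ A+A and d ∈ A−A respectively. -/
/-!
Expanding `(n - 1) * (n - 2) = n ^ 2 - 3 * n + 2` over the fibres of `(a, b) ↦ a + b`, the first
sum becomes `(E - 3 |A|² + 2 |A + A|) / 2`, where `E` counts the solutions of `a + b = c + d`.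
Over the fibres of `(a, b) ↦ a - b` one gets the same expression with `|A - A|` and the number of
solutions of `a - b = c - d`, which is again `E` because `a - b = c - d ↔ a + d = c + b`.
-/

open Pointwise Finset
open scoped Combinatorics.Additive

namespace Finset

section AddCommGroup

variable {α : Type*} [AddCommGroup α] [DecidableEq α]

lemma card_filter_sub_eq_card_filter_add_neg (s : Finset α) (d : α) :
    #{p ∈ s ×ˢ s | p.1 - p.2 = d} = #{p ∈ s ×ˢ (-s) | p.1 + p.2 = d} :=
  card_equiv ((Equiv.refl α).prodCongr (Equiv.neg α)) (by simp [sub_eq_add_neg])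

lemma addEnergy_neg_right (s : Finset α) : E[s, -s] = E[s] :=
  card_equiv ((Equiv.refl (α × α)).prodCongr ((Equiv.prodComm α α).trans
      ((Equiv.neg α).prodCongr (Equiv.neg α)))) <| by
    rintro ⟨⟨a₁, a₂⟩, b₁, b₂⟩
    simp only [mem_filter, mem_product, mem_neg', Equiv.prodCongr_apply, Prod.map, Equiv.refl_apply,
      Equiv.trans_apply, Equiv.prodComm_apply, Prod.swap, Equiv.neg_apply, ← sub_eq_add_neg,
      sub_eq_sub_iff_add_eq_add]
    tauto

lemma sum_sq_card_filter_sub_eq_addEnergy (s : Finset α) :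
    ∑ d ∈ s - s, #{p ∈ s ×ˢ s | p.1 - p.2 = d} ^ 2 = E[s] := by
  rw [← addEnergy_neg_right, addEnergy_eq_sum_sq', ← sub_eq_add_neg]
  simp only [card_filter_sub_eq_card_filter_add_neg]

end AddCommGroup

lemma sum_sub_one_mul_sub_two_div_two {ι : Type*} (t : Finset ι) (g : ι → ℤ) :
    ∑ i ∈ t, (g i - 1) * (g i - 2) / 2 = (∑ i ∈ t, (g i - 1) * (g i - 2)) / 2 := by
  refine (Int.sum_div fun i _ => ?_).symm
  rw [← even_iff_two_dvd, show (g i - 1) * (g i - 2) = (g i - 2) * (g i - 2 + 1) by ring]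
  exact Int.even_mul_succ_self _

lemma sum_card_fiber_sub_one_mul_sub_two {ι β : Type*} [DecidableEq β] (s : Finset ι)
    (t : Finset β) (f : ι → β) (hf : ∀ x ∈ s, f x ∈ t) :
    ∑ b ∈ t, ((#{x ∈ s | f x = b} : ℤ) - 1) * (#{x ∈ s | f x = b} - 2) =
      ∑ b ∈ t, (#{x ∈ s | f x = b} : ℤ) ^ 2 - 3 * #s + 2 * #t := by
  have hsum : ∑ b ∈ t, (#{x ∈ s | f x = b} : ℤ) = #s := by
    exact_mod_cast (card_eq_sum_card_fiberwise hf).symm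
  have hexpand : ∀ n : ℤ, (n - 1) * (n - 2) = n ^ 2 - 3 * n + 2 := fun n => by ring
  simp only [hexpand, sum_add_distrib, sum_sub_distrib, ← mul_sum, hsum, sum_const, nsmul_eq_mul,
    mul_comm]

end Finset

theorem stmt14 (A : Finset ℤ) :
    ((A + A).card : ℤ) - ((A - A).card : ℤ) =
      (∑ s ∈ A + A,
          ((((A ×ˢ A).filter (fun p => p.1 + p.2 = s)).card : ℤ) - 1) *
            ((((A ×ˢ A).filter (fun p => p.1 + p.2 = s)).card : ℤ) - 2) / 2)
        - ∑ d ∈ A - A,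
            ((((A ×ˢ A).filter (fun p => p.1 - p.2 = d)).card : ℤ) - 1) *
              ((((A ×ˢ A).filter (fun p => p.1 - p.2 = d)).card : ℤ) - 2) / 2 := by
  have hsumEnergy : ∑ s ∈ A + A, (#{p ∈ A ×ˢ A | p.1 + p.2 = s} : ℤ) ^ 2 = E[A] := by
    exact_mod_cast (addEnergy_eq_sum_sq' A A).symm
  have hdiffEnergy : ∑ d ∈ A - A, (#{p ∈ A ×ˢ A | p.1 - p.2 = d} : ℤ) ^ 2 = E[A] := by
    exact_mod_cast sum_sq_card_filter_sub_eq_addEnergy A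
  rw [sum_sub_one_mul_sub_two_div_two, sum_sub_one_mul_sub_two_div_two,
    sum_card_fiber_sub_one_mul_sub_two _ _ (fun p : ℤ × ℤ => p.1 + p.2)
      fun p hp => add_mem_add (mem_product.1 hp).1 (mem_product.1 hp).2,
    sum_card_fiber_sub_one_mul_sub_two _ _ (fun p : ℤ × ℤ => p.1 - p.2)
      fun p hp => sub_mem_sub (mem_product.1 hp).1 (mem_product.1 hp).2,
    hsumEnergy, hdiffEnergy]
  omega
end

section
/- For integers n ≥ 2k+1 ≥ 1, suppose the pair (A,B) of subsets of {0,...,n} is a rich MSTD pair with fringe tuple (L,L',R,R';k), i.e., A ∩ [0,k] = L, B ∩ [0,k] = L', (n−A) ∩ [0,k] = R, (n−B) ∩ [0,k] = R', [k+1, 2n−k−1] ⊆ A+B, and |(L+L') ∩ [0,k]| + |(R+R') ∩ [0,k]| > 2·|((L+R') ∩ [0,k]) ∪ ((L'+R) ∩ [0,k])|. Then |A+B| > |(A−B) ∪ (B−A)|. -/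
/-!
Both sides are counted against the length `2n - 2k - 1` of the middle interval. All of
`[k+1, 2n-k-1]` lies in `A + B`, and the fringe sums `(L + L') ∩ [0,k]` and
`2n - (R + R') ∩ [0,k]` add disjoint pieces below and above it. Every difference `a - b`
lies in `[-(n-k-1), n-k-1]` except when `|a - b| ≥ n - k`; then both summands sit in the
fringes, and `n - |a - b|` is a sum from `(L + R') ∩ [0,k]` or `(L' + R) ∩ [0,k]`. So the
difference set exceeds the middle interval by at most twice the size of that union.
-/

open Pointwise

namespace Finset

variable {n k a b : ℤ} {A B L L' R R' : Finset ℤ}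

theorem two_mul_sub_mem_add_of_mem_add_image_sub {s : ℤ}
    (hs : s ∈ A.image (n - ·) + B.image (n - ·)) : 2 * n - s ∈ A + B := by
  obtain ⟨_, hx, _, hy, rfl⟩ := mem_add.mp hs
  obtain ⟨a, ha, rfl⟩ := mem_image.mp hx
  obtain ⟨b, hb, rfl⟩ := mem_image.mp hy
  convert add_mem_add ha hb using 1
  ring

theorem card_Icc_add_fringe_le_card_add (hkn : k < n)
    (hL : L ⊆ A) (hL' : L' ⊆ B) (hR : R ⊆ A.image (n - ·)) (hR' : R' ⊆ B.image (n - ·))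
    (hmid : Icc (k + 1) (2 * n - k - 1) ⊆ A + B) :
    2 * n - 2 * k - 1 + #((L + L') ∩ Icc 0 k) + #((R + R') ∩ Icc 0 k) ≤ (#(A + B) : ℤ) := by
  set low := (L + L') ∩ Icc 0 k
  set high := ((R + R') ∩ Icc 0 k).image (2 * n - ·)
  have hsub : Icc (k + 1) (2 * n - k - 1) ∪ low ∪ high ⊆ A + B := by
    refine union_subset (union_subset hmid ?_) ?_
    · exact inter_subset_left.trans (add_subset_add hL hL')
    · exact image_subset_iff.mpr fun s hs =>
        two_mul_sub_mem_add_of_mem_add_image_sub (add_subset_add hR hR' (mem_of_mem_inter_left hs))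
  have hdisj_low : Disjoint (Icc (k + 1) (2 * n - k - 1)) low := by
    refine disjoint_left.mpr fun x hmid hlow => ?_
    simp only [low, mem_inter, mem_Icc] at hmid hlow
    omega
  have hdisj_high : Disjoint (Icc (k + 1) (2 * n - k - 1) ∪ low) high := by
    refine disjoint_left.mpr fun x hx hhigh => ?_
    obtain ⟨s, hs, rfl⟩ := mem_image.mp hhigh
    simp only [low, mem_union, mem_inter, mem_Icc] at hx hs
    omega
  have hcard_high : #high = #((R + R') ∩ Icc 0 k) :=
    card_image_of_injective _ sub_right_injective
  have := card_le_card hsub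
  rw [card_union_of_disjoint hdisj_high, card_union_of_disjoint hdisj_low, Int.card_Icc,
    hcard_high] at this
  omega

theorem sub_mem_add_inter_of_le_sub (hA : A ⊆ Icc 0 n) (hB : B ⊆ Icc 0 n)
    (hL' : B ∩ Icc 0 k ⊆ L') (hR : A.image (n - ·) ∩ Icc 0 k ⊆ R)
    (ha : a ∈ A) (hb : b ∈ B) (h : n - k ≤ a - b) : n - (a - b) ∈ (L' + R) ∩ Icc 0 k := by
  have ha' := mem_Icc.mp (hA ha)
  have hb' := mem_Icc.mp (hB hb)
  refine mem_inter.mpr ⟨?_, mem_Icc.mpr (by omega)⟩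
  convert add_mem_add (hL' (mem_inter.mpr ⟨hb, mem_Icc.mpr (by omega)⟩))
    (hR (mem_inter.mpr ⟨mem_image_of_mem _ ha, mem_Icc.mpr (by omega)⟩)) using 1
  ring

theorem sub_mem_Icc_union_fringe (hA : A ⊆ Icc 0 n) (hB : B ⊆ Icc 0 n)
    (hL : A ∩ Icc 0 k ⊆ L) (hL' : B ∩ Icc 0 k ⊆ L')
    (hR : A.image (n - ·) ∩ Icc 0 k ⊆ R) (hR' : B.image (n - ·) ∩ Icc 0 k ⊆ R')
    (ha : a ∈ A) (hb : b ∈ B) :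
    a - b ∈ Icc (k + 1 - n) (n - k - 1) ∪ ((L' + R) ∩ Icc 0 k).image (n - ·)
      ∪ ((L + R') ∩ Icc 0 k).image (· - n) := by
  obtain h | h | h :
      a - b ∈ Icc (k + 1 - n) (n - k - 1) ∨ n - k ≤ a - b ∨ n - k ≤ b - a := by
    rw [mem_Icc]; omega
  · exact mem_union_left _ (mem_union_left _ h)
  · exact mem_union_left _ (mem_union_right _
      (mem_image.mpr ⟨_, sub_mem_add_inter_of_le_sub hA hB hL' hR ha hb h, by ring⟩))
  · exact mem_union_right _
      (mem_image.mpr ⟨_, sub_mem_add_inter_of_le_sub hB hA hL hR' hb ha h, by ring⟩)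

theorem card_sub_union_sub_le (hkn : k < n) (hA : A ⊆ Icc 0 n) (hB : B ⊆ Icc 0 n)
    (hL : A ∩ Icc 0 k ⊆ L) (hL' : B ∩ Icc 0 k ⊆ L')
    (hR : A.image (n - ·) ∩ Icc 0 k ⊆ R) (hR' : B.image (n - ·) ∩ Icc 0 k ⊆ R') :
    (#((A - B) ∪ (B - A)) : ℤ) ≤
      2 * n - 2 * k - 1 + 2 * #(((L + R') ∩ Icc 0 k) ∪ ((L' + R) ∩ Icc 0 k)) := by
  set U := ((L + R') ∩ Icc 0 k) ∪ ((L' + R) ∩ Icc 0 k)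
  have hsub : (A - B) ∪ (B - A) ⊆
      Icc (k + 1 - n) (n - k - 1) ∪ U.image (n - ·) ∪ U.image (· - n) := by
    refine union_subset (fun x hx => ?_) (fun x hx => ?_)
    · obtain ⟨a, ha, b, hb, rfl⟩ := mem_sub.mp hx
      exact union_subset_union (union_subset_union subset_rfl
        (image_subset_image subset_union_right)) (image_subset_image subset_union_left)
        (sub_mem_Icc_union_fringe hA hB hL hL' hR hR' ha hb)
    · obtain ⟨b, hb, a, ha, rfl⟩ := mem_sub.mp hx
      exact union_subset_union (union_subset_union subset_rfl
        (image_subset_image subset_union_left)) (image_subset_image subset_union_right)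
        (sub_mem_Icc_union_fringe hB hA hL' hL hR' hR hb ha)
  have hcard := (card_le_card hsub).trans <| (card_union_le _ _).trans <|
    add_le_add (card_union_le _ _) card_image_le
  have := card_image_le (s := U) (f := (n - ·))
  have := card_image_le (s := U) (f := (· - n))
  rw [Int.card_Icc] at hcard
  omega

end Finset

theorem stmt16 (n k : ℤ) (hk : 0 ≤ k) (hn : 2 * k + 1 ≤ n)
    (A B L L' R R' : Finset ℤ)
    (hA : A ⊆ Finset.Icc 0 n) (hB : B ⊆ Finset.Icc 0 n)
    (hL : A ∩ Finset.Icc 0 k = L)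
    (hL' : B ∩ Finset.Icc 0 k = L')
    (hR : (A.image (fun a => n - a)) ∩ Finset.Icc 0 k = R)
    (hR' : (B.image (fun b => n - b)) ∩ Finset.Icc 0 k = R')
    (hmid : Finset.Icc (k + 1) (2 * n - k - 1) ⊆ A + B)
    (hfringe : ((L + L') ∩ Finset.Icc 0 k).card + ((R + R') ∩ Finset.Icc 0 k).card >
      2 * (((L + R') ∩ Finset.Icc 0 k) ∪ ((L' + R) ∩ Finset.Icc 0 k)).card) :
    (A + B).card > ((A - B) ∪ (B - A)).card := by
  have hkn : k < n := by omega
  have hsum := Finset.card_Icc_add_fringe_le_card_add hkn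
    (hL.symm.subset.trans Finset.inter_subset_left)
    (hL'.symm.subset.trans Finset.inter_subset_left)
    (hR.symm.subset.trans Finset.inter_subset_left)
    (hR'.symm.subset.trans Finset.inter_subset_left) hmid
  have hdiff := Finset.card_sub_union_sub_le hkn hA hB hL.subset hL'.subset hR.subset hR'.subset
  omega
end

section
/- Let ξ_{1,k}(N) = Σ_{n=2k}^{2N−2k} C(min{⌊n/2⌋, ⌊(2N−n)/2⌋}, k) count the unordered k-tuples of pairs from {0,...,N}² consisting of 2k distinct elements with all pairs having the same sum. Then ξ_{1,k}(N) ∼ (2/(2^k (k+1)!)) · N^{k+1} as N → ∞, i.e., ξ_{1,k}(N) · 2^k (k+1)! / (2 N^{k+1}) → 1. -/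
open Filter

noncomputable def xi (k N : ℕ) : ℕ :=
  ∑ n ∈ Finset.Icc (2 * k) (2 * N - 2 * k),
    Nat.choose (min (n / 2) ((2 * N - n) / 2)) k

/-!
By Pascal's rule, `∑_{n < L} C(⌊n/2⌋, k) = C(⌊L/2⌋, k+1) + C(⌊(L+1)/2⌋, k+1)`. The summand of
`ξ_{1,k}(N)` vanishes for `n < 2k` and `n > 2N - 2k` and is symmetric under `n ↦ 2N - n`, so
`ξ_{1,k}(N) = C(⌊N/2⌋, k+1) + 2 C(⌊(N+1)/2⌋, k+1) + C(⌊(N+2)/2⌋, k+1)`. Each of these four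
binomial coefficients is asymptotic to `(N/2)^(k+1) / (k+1)!`.
-/

open Finset Asymptotics Topology

theorem sum_range_choose_div_two (k L : ℕ) :
    ∑ n ∈ range L, (n / 2).choose k = (L / 2).choose (k + 1) + ((L + 1) / 2).choose (k + 1) := by
  induction L with
  | zero => simp
  | succ L ih =>
    rw [sum_range_succ, ih, show (L + 1 + 1) / 2 = L / 2 + 1 by omega, Nat.choose_succ_succ']
    ring

theorem xi_eq_sum_range_add_sum_range (k N : ℕ) :
    xi k N = ∑ n ∈ range (N + 1), (n / 2).choose k + ∑ n ∈ range N, (n / 2).choose k := by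
  set f : ℕ → ℕ := fun n ↦ (min (n / 2) ((2 * N - n) / 2)).choose k
  have extend : xi k N = ∑ n ∈ range (N + 1 + N), f n := by
    refine sum_subset (fun n hn ↦ ?_) (fun n hn hn' ↦ Nat.choose_eq_zero_of_lt ?_)
    · simp only [mem_Icc, mem_range] at hn ⊢
      omega
    · simp only [mem_Icc, mem_range, not_and_or, not_le] at hn hn'
      omega
  rw [extend, sum_range_add, ← sum_range_reflect (fun n ↦ f (N + 1 + n)) N]
  congr 1
  · refine sum_congr rfl fun n hn ↦ ?_
    rw [mem_range] at hn
    simp only [f, min_eq_left (show n / 2 ≤ (2 * N - n) / 2 by omega)]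
  · refine sum_congr rfl fun n hn ↦ ?_
    rw [mem_range] at hn
    simp only [f]
    congr 1
    omega

theorem xi_eq_choose (k N : ℕ) :
    xi k N = (N / 2).choose (k + 1) + 2 * ((N + 1) / 2).choose (k + 1)
      + ((N + 2) / 2).choose (k + 1) := by
  rw [xi_eq_sum_range_add_sum_range, sum_range_choose_div_two, sum_range_choose_div_two]
  ring

theorem isEquivalent_add_div_two (a : ℕ) :
    (fun N : ℕ ↦ (((N + a) / 2 : ℕ) : ℝ)) ~[atTop] fun N ↦ (N : ℝ) / 2 := by
  have bounded : (fun N : ℕ ↦ (((N + a) / 2 : ℕ) : ℝ) - N / 2) =O[atTop] fun _ ↦ (1 : ℝ) := by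
    refine IsBigO.of_bound (a + 1) (Eventually.of_forall fun N ↦ ?_)
    obtain ⟨h₁, h₂⟩ : (((N + a) / 2 : ℕ) : ℝ) * 2 ≤ N + a ∧
        (N : ℝ) < (((N + a) / 2 : ℕ) : ℝ) * 2 + 2 := by
      exact_mod_cast (by omega : (N + a) / 2 * 2 ≤ N + a ∧ N < (N + a) / 2 * 2 + 2)
    rw [Real.norm_eq_abs, norm_one, abs_le]
    constructor <;> linarith
  have : (fun _ ↦ (1 : ℝ)) =o[atTop] fun N : ℕ ↦ (N : ℝ) / 2 :=
    (isLittleO_one_left_iff ℝ).2 <| tendsto_norm_atTop_atTop.comp <|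
      tendsto_natCast_atTop_atTop.atTop_div_const two_pos
  exact bounded.trans_isLittleO this

theorem tendsto_choose_add_div_two (a k : ℕ) :
    Tendsto (fun N : ℕ ↦ (((N + a) / 2).choose k : ℝ) * (2 ^ k * k.factorial) / N ^ k) atTop
      (𝓝 1) := by
  have hm : Tendsto (fun N ↦ (N + a) / 2) atTop atTop :=
    (Nat.tendsto_div_const_atTop two_ne_zero).comp (tendsto_add_atTop_nat a)
  have h := ((isEquivalent_choose k).comp_tendsto hm).trans
    (((isEquivalent_add_div_two a).pow k).div IsEquivalent.refl)
  rw [isEquivalent_iff_tendsto_one] at h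
  · refine h.congr fun N ↦ ?_
    simp only [Pi.div_apply, Function.comp_apply, Pi.pow_apply]
    rw [div_pow, div_div, div_div_eq_mul_div]
  · filter_upwards [eventually_ne_atTop 0] with N hN
    simp only [Pi.div_apply, Pi.pow_apply]
    positivity

theorem stmt19_general (k : ℕ) :
    Tendsto
      (fun N : ℕ =>
        (xi k N : ℝ) * 2 ^ k * (Nat.factorial (k + 1)) / (2 * (N : ℝ) ^ (k + 1)))
      atTop (nhds 1) := by
  have h := (((tendsto_choose_add_div_two 0 (k + 1)).add
    ((tendsto_choose_add_div_two 1 (k + 1)).const_mul 2)).add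
    (tendsto_choose_add_div_two 2 (k + 1))).div_const 4
  simp only [add_zero] at h
  rw [show ((1 : ℝ) + 2 * 1 + 1) / 4 = 1 by norm_num] at h
  refine h.congr fun N ↦ ?_
  rw [xi_eq_choose]
  push_cast
  ring

theorem stmt19 (k : ℕ) (hk : 1 ≤ k) :
    Tendsto
      (fun N : ℕ =>
        (xi k N : ℝ) * 2 ^ k * (Nat.factorial (k + 1)) / (2 * (N : ℝ) ^ (k + 1)))
      atTop (nhds 1) :=
  stmt19_general k
end
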